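/- Let G be a group and H ≤ G a finitely generated subgroup which admits a nonempty strongly aperiodic SFT (over some finite alphabet), and suppose that for every g ∈ G with g ≠ 1 there exist t ∈ G, an integer n > 0 and h ∈ H with h ≠ 1 such that (t g t⁻¹)^n = h (i.e. Cl(g) ∩ R_G(H \ {1}) ≠ ∅). Then G admits a nonempty strongly aperiodic SFT. -/

import Mathlib

/-! Induce a strongly aperiodic SFT on `H` to `G` by imposing the same allowed patterns on every
coset. Every translate of a configuration of the induced SFT restricts on `H` to a point of the SFT
on `H`; conversely a point of the SFT on `H`, copied onto every left coset, gives a point of the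
induced SFT. A period `g ≠ 1` of `x` would make the nontrivial `(t g t⁻¹)ⁿ ∈ H` a period of the
restriction of `t • x`. -/

variable {G A : Type*}

/-- The left shift action of a group on configurations: `(shift g x) h = x (g⁻¹ * h)`. -/
def shift [Group G] (g : G) (x : G → A) : G → A := fun h => x (g⁻¹ * h)

/-- The subshift of finite type on `G` defined by the shape `F` and the pattern set `L`:
all configurations `x` such that for every `g`, the restriction of `g • x` to `F` lies in `L`. -/
def SFT [Group G] (F : Set G) (L : Set (F → A)) : Set (G → A) :=
  {x | ∀ g : G, (fun f : F => shift g x f) ∈ L}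

/-- The subshift of finite type on the subgroup `H` defined by the shape `F ⊆ H`
and the pattern set `L`. -/
def SFTon [Group G] (H : Subgroup G) (F : Set G) (hF : F ⊆ (H : Set G)) (L : Set (F → A)) :
    Set (↥H → A) :=
  {y | ∀ h : ↥H, (fun f : F => y (h⁻¹ * ⟨(f : G), hF f.2⟩)) ∈ L}

/-- The free part of a subshift: elements acting freely on every configuration. -/
def freePart [Group G] (X : Set (G → A)) : Set G := {g | ∀ x ∈ X, shift g x ≠ x}

open Set

section Shift

variable [Group G]

lemma shift_one (x : G → A) : shift 1 x = x := by
  funext k; simp [shift]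

lemma shift_mul (a b : G) (x : G → A) : shift (a * b) x = shift a (shift b x) := by
  funext k; simp [shift, mul_assoc]

lemma shift_pow_of_shift_eq {a : G} {x : G → A} (hx : shift a x = x) (n : ℕ) :
    shift (a ^ n) x = x := by
  induction n with
  | zero => rw [pow_zero, shift_one]
  | succ n ih => rw [pow_succ, shift_mul, hx, ih]

lemma shift_conj_of_shift_eq {g : G} {x : G → A} (hx : shift g x = x) (t : G) :
    shift (t * g * t⁻¹) (shift t x) = shift t x := by
  rw [← shift_mul, inv_mul_cancel_right, shift_mul, hx]

lemma shift_mem_SFT {F : Set G} {L : Set (F → A)} {x : G → A} (hx : x ∈ SFT F L) (t : G) :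
    shift t x ∈ SFT F L := by
  intro g
  simpa only [← shift_mul] using hx (g * t)

end Shift

section Induced

variable [Group G] {H : Subgroup G}

def inducedPatterns {F : Set H} (L : Set (F → A)) : Set (((↑) '' F : Set G) → A) :=
  {p | (fun f : F => p ⟨f, mem_image_of_mem _ f.2⟩) ∈ L}

lemma shift_comp_coe (h : H) (x : G → A) :
    shift h (x ∘ (↑) : H → A) = shift (h : G) x ∘ (↑) :=
  rfl

lemma comp_coe_mem_SFT {F : Set H} {L : Set (F → A)} {x : G → A}
    (hx : x ∈ SFT ((↑) '' F) (inducedPatterns L)) : (x ∘ (↑) : H → A) ∈ SFT F L :=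
  fun h => hx h

lemma out_inv_mul_mem (g : G) : (g : G ⧸ H).out⁻¹ * g ∈ H :=
  QuotientGroup.eq.mp (QuotientGroup.out_eq' _)

/-- Extends `y : H → A` to `G` by copying it onto every left coset `gH`, transported along the
chosen representative of `gH`. -/
noncomputable def cosetExtension (y : H → A) : G → A :=
  fun g => y ⟨(g : G ⧸ H).out⁻¹ * g, out_inv_mul_mem g⟩

lemma cosetExtension_mul (y : H → A) (g : G) (k : H) :
    cosetExtension y (g * k) = y (⟨(g : G ⧸ H).out⁻¹ * g, out_inv_mul_mem g⟩ * k) := by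
  simp only [cosetExtension, QuotientGroup.mk_mul_of_mem g k.2]
  congr 1
  ext
  simp [mul_assoc]

lemma cosetExtension_mem_SFT {F : Set H} {L : Set (F → A)} {y : H → A} (hy : y ∈ SFT F L) :
    cosetExtension y ∈ SFT ((↑) '' F) (inducedPatterns L) := by
  intro g
  let h₀ : H := ⟨((g⁻¹ : G) : G ⧸ H).out⁻¹ * g⁻¹, out_inv_mul_mem g⁻¹⟩
  have hpattern : (fun f : F => shift g (cosetExtension y) f) = fun f : F => shift h₀⁻¹ y f := by
    funext f
    simp only [shift, inv_inv, cosetExtension_mul]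
    rfl
  exact (hpattern ▸ hy h₀⁻¹ :)

lemma eq_one_of_pow_conj_eq {F : Set H} {L : Set (F → A)}
    (hSA : ∀ y ∈ SFT F L, ∀ h : H, shift h y = y → h = 1) {x : G → A}
    (hx : x ∈ SFT ((↑) '' F) (inducedPatterns L)) {g : G} (hgx : shift g x = x) {t : G} {n : ℕ}
    {h : H} (hpow : (t * g * t⁻¹) ^ n = h) : h = 1 :=
  hSA _ (comp_coe_mem_SFT (shift_mem_SFT hx t)) h <| by
    rw [shift_comp_coe, ← hpow, shift_pow_of_shift_eq (shift_conj_of_shift_eq hgx t)]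

end Induced

theorem exists_SA_SFT_of_subgroup_general
    {G : Type*} [Group G] (H : Subgroup G)
    (hHsft : ∃ (A : Type) (_ : Finite A) (F : Set ↥H) (_ : F.Finite) (L : Set (F → A)),
        (SFT F L).Nonempty ∧ ∀ y ∈ SFT F L, ∀ h : ↥H, shift h y = y → h = 1)
    (hcond : ∀ g : G, g ≠ 1 → ∃ t : G, ∃ n : ℕ, 0 < n ∧
        ∃ h : ↥H, (h : G) ≠ 1 ∧ (t * g * t⁻¹) ^ n = (h : G)) :
    ∃ (A : Type) (_ : Finite A) (F : Set G) (_ : F.Finite) (L : Set (F → A)),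
        (SFT F L).Nonempty ∧ ∀ x ∈ SFT F L, ∀ g : G, shift g x = x → g = 1 := by
  obtain ⟨A, hA, F, hF, L, ⟨y, hy⟩, hSA⟩ := hHsft
  refine ⟨A, hA, (↑) '' F, hF.image _, inducedPatterns L, ⟨_, cosetExtension_mem_SFT hy⟩, ?_⟩
  intro x hx g hgx
  by_contra hg
  obtain ⟨t, n, -, h, hh, hpow⟩ := hcond g hg
  exact hh (congrArg Subtype.val (eq_one_of_pow_conj_eq hSA hx hgx hpow))

/-- If a finitely generated subgroup `H ≤ G` admits a nonempty strongly
aperiodic SFT and every nontrivial element of `G` has a conjugate with a positive power equal to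
a nontrivial element of `H`, then `G` admits a nonempty strongly aperiodic SFT. -/
theorem exists_SA_SFT_of_subgroup
    {G : Type*} [Group G] (H : Subgroup G) (hHfg : H.FG)
    (hHsft : ∃ (A : Type) (_ : Finite A) (F : Set ↥H) (_ : F.Finite) (L : Set (F → A)),
        (SFT F L).Nonempty ∧ ∀ y ∈ SFT F L, ∀ h : ↥H, shift h y = y → h = 1)
    (hcond : ∀ g : G, g ≠ 1 → ∃ t : G, ∃ n : ℕ, 0 < n ∧
        ∃ h : ↥H, (h : G) ≠ 1 ∧ (t * g * t⁻¹) ^ n = (h : G)) :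
    ∃ (A : Type) (_ : Finite A) (F : Set G) (_ : F.Finite) (L : Set (F → A)),
        (SFT F L).Nonempty ∧ ∀ x ∈ SFT F L, ∀ g : G, shift g x = x → g = 1 :=
  exists_SA_SFT_of_subgroup_general H hHsft hcond
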